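/- arXiv:1303.5964 — 3 statements merged into one kernel-verified Lean document; each statement's English description precedes it below -/
import Mathlib

section
/- Let X : [0,∞) → ℝ be a nondecreasing right-continuous function with X(0) = 0, let Y(t) = X(t) − t, and let z ≥ 0. Suppose Z : [0,∞) → ℝ is right-continuous, nonnegative, and satisfies Z(t) = z + Y(t) + ∫_0^t 1{Z(s) = 0} ds for every t ≥ 0 (Lebesgue integral of the indicator). Then for every t ≥ 0, Z(t) = z + Y(t) + max(0, −(inf_{s∈[0,t]} Y(s) + z)); in particular the integral equation has a unique nonnegative right-continuous solution. -/
/-!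
Write `L u` for the Lebesgue measure of the zero set of `Z` in `[0, u]`, so that `Z = z + Y + L`.
Nonnegativity of `Z` gives `L t ≥ -(z + Y s)` for all `s ≤ t`, so `L t` is at least the reflection
term. Conversely, at a zero `s` of `Z` we have `L s = -(z + Y s)`, which is at most the reflection
term; `L` does not grow after the last zero in `[0, t]`, and, being `1`-Lipschitz, its value there
is approximated by its values at zeros.
-/

open Set MeasureTheory Filter Topology

theorem measurable_of_forall_continuousWithinAt_Ici {β : Type*} [TopologicalSpace β]
    [TopologicalSpace.PseudoMetrizableSpace β] [MeasurableSpace β] [BorelSpace β] {f : ℝ → β}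
    (hf : ∀ x, ContinuousWithinAt f (Ici x) x) : Measurable f := by
  let g : ℕ → ℝ → ℝ := fun n s => ⌈s * (n + 1)⌉ / (n + 1)
  have hg : ∀ n, Measurable (f ∘ g n) := fun n =>
    (measurable_of_countable fun k : ℤ => f (k / (n + 1))).comp
      (Int.measurable_ceil.comp (measurable_id.mul_const _))
  refine measurable_of_tendsto_metrizable hg (tendsto_pi_nhds.2 fun s => ?_)
  have hge : ∀ n : ℕ, s ≤ g n s := fun n => by
    rw [le_div_iff₀ (by positivity)]
    exact Int.le_ceil _
  have hle : ∀ n : ℕ, g n s ≤ s + 1 / (n + 1) := fun n => by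
    rw [div_le_iff₀ (by positivity), add_mul, one_div_mul_cancel (by positivity)]
    exact (Int.ceil_lt_add_one _).le
  have hlim : Tendsto (fun n => g n s) atTop (𝓝[≥] s) := by
    refine tendsto_nhdsWithin_iff.2 ⟨?_, Eventually.of_forall hge⟩
    refine tendsto_of_tendsto_of_tendsto_of_le_of_le tendsto_const_nhds ?_ hge hle
    simpa using tendsto_const_nhds.add (tendsto_one_div_add_atTop_nhds_zero_nat (𝕜 := ℝ))
  exact (hf s).tendsto.comp hlim

theorem measurable_comp_max_of_continuousWithinAt_Ici {β : Type*} [TopologicalSpace β]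
    [TopologicalSpace.PseudoMetrizableSpace β] [MeasurableSpace β] [BorelSpace β] {f : ℝ → β}
    {a : ℝ} (hf : ∀ x, a ≤ x → ContinuousWithinAt f (Ici x) x) :
    Measurable fun s => f (max s a) :=
  measurable_of_forall_continuousWithinAt_Ici fun s =>
    (hf _ (le_max_right s a)).comp (f := fun u => max u a)
      (continuous_id.max continuous_const).continuousWithinAt
      fun _ hu => mem_Ici.2 (max_le_max_right a (mem_Ici.1 hu))

theorem volume_real_inter_Icc_le {A : Set ℝ} {a t c : ℝ} (hc : 0 ≤ c)
    (h : ∀ s ∈ A ∩ Icc a t, volume.real (A ∩ Icc a s) ≤ c) :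
    volume.real (A ∩ Icc a t) ≤ c := by
  rcases (A ∩ Icc a t).eq_empty_or_nonempty with hempty | hne
  · simpa [hempty] using hc
  have hbdd : BddAbove (A ∩ Icc a t) := bddAbove_Icc.mono inter_subset_right
  set m := sSup (A ∩ Icc a t)
  refine le_of_forall_pos_lt_add fun ε hε => ?_
  obtain ⟨s, hs, hms⟩ := exists_lt_of_lt_csSup hne (sub_lt_self m hε)
  have hsm : s ≤ m := le_csSup hbdd hs
  have hcover : A ∩ Icc a t ⊆ (A ∩ Icc a s) ∪ Ioc s m := by
    rintro u ⟨huA, hau, hut⟩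
    by_cases hus : u ≤ s
    · exact Or.inl ⟨huA, hau, hus⟩
    · exact Or.inr ⟨lt_of_not_ge hus, le_csSup hbdd ⟨huA, hau, hut⟩⟩
  calc volume.real (A ∩ Icc a t)
      ≤ volume.real (A ∩ Icc a s) + volume.real (Ioc s m) :=
        (measureReal_mono hcover (measure_union_lt_top ((measure_mono inter_subset_right).trans_lt
          measure_Icc_lt_top) measure_Ioc_lt_top).ne).trans (measureReal_union_le _ _)
    _ ≤ c + (m - s) := by rw [Real.volume_real_Ioc_of_le hsm]; linarith [h s hs]
    _ < c + ε := by linarith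

theorem volume_real_inter_Icc_eq_max_neg_sInf {A : Set ℝ} {Y : ℝ → ℝ} {x a t : ℝ} (hat : a ≤ t)
    (hnonneg : ∀ s ∈ Icc a t, 0 ≤ x + Y s + volume.real (A ∩ Icc a s))
    (hzero : ∀ s ∈ A ∩ Icc a t, x + Y s + volume.real (A ∩ Icc a s) = 0) :
    volume.real (A ∩ Icc a t) = max 0 (-(sInf (Y '' Icc a t) + x)) := by
  have hlower : ∀ s ∈ Icc a t, -(x + Y s) ≤ volume.real (A ∩ Icc a t) := fun s hs => by
    have : volume.real (A ∩ Icc a s) ≤ volume.real (A ∩ Icc a t) :=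
      measureReal_mono (inter_subset_inter_right _ (Icc_subset_Icc_right hs.2))
        ((measure_mono inter_subset_right).trans_lt measure_Icc_lt_top).ne
    linarith [hnonneg s hs]
  have hbdd : BddBelow (Y '' Icc a t) := by
    refine ⟨-(x + volume.real (A ∩ Icc a t)), ?_⟩
    rintro _ ⟨s, hs, rfl⟩
    linarith [hlower s hs]
  apply le_antisymm
  · refine volume_real_inter_Icc_le (le_max_left _ _) fun s hs => ?_
    have := csInf_le hbdd (mem_image_of_mem Y hs.2)
    linarith [hzero s hs, le_max_right 0 (-(sInf (Y '' Icc a t) + x))]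
  · refine max_le measureReal_nonneg ?_
    have : -x - volume.real (A ∩ Icc a t) ≤ sInf (Y '' Icc a t) := by
      refine le_csInf ((nonempty_Icc.2 hat).image Y) ?_
      rintro _ ⟨s, hs, rfl⟩
      linarith [hlower s hs]
    linarith

theorem stmt_1_general
    (Y : ℝ → ℝ)
    (z : ℝ)
    (Z : ℝ → ℝ)
    (hZrc : ∀ t : ℝ, 0 ≤ t → ContinuousWithinAt Z (Ici t) t)
    (hZnn : ∀ t : ℝ, 0 ≤ t → 0 ≤ Z t)
    (hZeq : ∀ t : ℝ, 0 ≤ t →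
      Z t = z + Y t +
        ∫ s in Icc (0 : ℝ) t, ({s : ℝ | Z s = 0}).indicator (fun _ => (1 : ℝ)) s) :
    ∀ t : ℝ, 0 ≤ t → Z t = z + Y t + max 0 (-(sInf (Y '' Icc 0 t) + z)) := by
  intro t ht
  set A := {s : ℝ | Z s = 0} ∩ Ici 0
  have hA : MeasurableSet A := by
    convert (measurable_comp_max_of_continuousWithinAt_Ici hZrc (measurableSet_singleton 0)).inter
      (measurableSet_Ici (a := 0)) using 1
    ext s
    exact and_congr_left fun hs => by rw [mem_preimage, max_eq_left hs]; rfl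
  have hZ : ∀ u ∈ Icc 0 t, Z u = z + Y u + volume.real (A ∩ Icc 0 u) := by
    intro u hu
    have hind : EqOn ({s | Z s = 0}.indicator fun _ => (1 : ℝ)) (A.indicator fun _ => 1)
        (Icc 0 u) := fun s hs => by simp [A, indicator_apply, hs.1]
    rw [hZeq u hu.1, setIntegral_congr_fun measurableSet_Icc hind, setIntegral_indicator hA,
      setIntegral_const, smul_eq_mul, mul_one, inter_comm]
  rw [hZ t ⟨ht, le_rfl⟩,
    volume_real_inter_Icc_eq_max_neg_sInf ht (fun s hs => hZ s hs ▸ hZnn s hs.1)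
      fun s hs => hZ s hs.2 ▸ hs.1.1]

/-- uniqueness part of Proposition 1, pathwise form.
Any nonnegative right-continuous solution of the storage integral equation
`Z t = z + Y t + ∫_0^t 1{Z s = 0} ds`, with `Y t = X t - t` for a nondecreasing
right-continuous inflow `X` with `X 0 = 0` and initial level `z ≥ 0`, is given
by the reflection formula. -/
theorem stmt_1 (X : ℝ → ℝ)
    (hmono : ∀ ⦃s t : ℝ⦄, 0 ≤ s → s ≤ t → X s ≤ X t)
    (hrc : ∀ t : ℝ, 0 ≤ t → ContinuousWithinAt X (Ici t) t)
    (hX0 : X 0 = 0)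
    (Y : ℝ → ℝ) (hY : ∀ t, Y t = X t - t)
    (z : ℝ) (hz : 0 ≤ z)
    (Z : ℝ → ℝ)
    (hZrc : ∀ t : ℝ, 0 ≤ t → ContinuousWithinAt Z (Ici t) t)
    (hZnn : ∀ t : ℝ, 0 ≤ t → 0 ≤ Z t)
    (hZeq : ∀ t : ℝ, 0 ≤ t →
      Z t = z + Y t +
        ∫ s in Icc (0 : ℝ) t, ({s : ℝ | Z s = 0}).indicator (fun _ => (1 : ℝ)) s) :
    ∀ t : ℝ, 0 ≤ t → Z t = z + Y t + max 0 (-(sInf (Y '' Icc 0 t) + z)) :=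
  stmt_1_general Y z Z hZrc hZnn hZeq
end

section
/- Let X : [0,∞) → ℝ be a nondecreasing right-continuous function with X(0) = 0, let Y(t) = X(t) − t, let z ≥ 0, and let Z : [0,∞) → ℝ be right-continuous, nonnegative, and satisfy Z(t) = z + Y(t) + ∫_0^t 1{Z(s) = 0} ds for all t ≥ 0. Then for every 0 < τ ≤ t one has Z(t) ≥ Y(t) − Y(τ⁻), where Y(τ⁻) denotes the left limit of Y at τ (which exists since X is nondecreasing), and moreover Z(t) ≥ Y(t). -/
/-!
The compensator `t ↦ ∫₀ᵗ 1{Z(s) = 0} ds` is nondecreasing, so subtracting the storage equation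
at times `τ ≤ t` gives `Z t - Z τ ≥ Y t - Y τ`, and `Z τ ≥ 0` leaves `Z t ≥ Y t - Y τ`; letting
`τ` increase to a given time passes to the left limit of `Y`. Monotonicity of the compensator
needs the integrand to be integrable, i.e. `{s ≥ 0 | Z s = 0}` to be measurable, which holds
because a right-continuous function is measurable.
-/

open Set MeasureTheory Filter Topology

section RightContinuous

variable {β : Type*} [TopologicalSpace β]

lemma continuousWithinAt_Ici_comp_max {f : ℝ → β} {a : ℝ}
    (hf : ∀ x, a ≤ x → ContinuousWithinAt f (Ici x) x) (x : ℝ) :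
    ContinuousWithinAt (fun y => f (max y a)) (Ici x) x :=
  (hf (max x a) (le_max_right x a)).comp (f := fun y => max y a)
    (continuous_id.max continuous_const).continuousWithinAt fun _ hy => max_le_max_right a hy

lemma tendsto_ceil_mul_div_nhdsWithin_Ici (x : ℝ) :
    Tendsto (fun n : ℕ => (⌈(n + 1 : ℝ) * x⌉ : ℝ) / (n + 1)) atTop (𝓝[≥] x) := by
  have hge : ∀ n : ℕ, x ≤ (⌈(n + 1 : ℝ) * x⌉ : ℝ) / (n + 1) := fun n => by
    rw [le_div_iff₀ (by positivity), mul_comm]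
    exact Int.le_ceil _
  have hle : ∀ n : ℕ, (⌈(n + 1 : ℝ) * x⌉ : ℝ) / (n + 1) ≤ x + 1 / (n + 1) := fun n => by
    rw [div_le_iff₀ (by positivity), add_mul x, one_div_mul_cancel (by positivity), mul_comm x]
    exact (Int.ceil_lt_add_one _).le
  have hlim : Tendsto (fun n : ℕ => x + 1 / (n + 1 : ℝ)) atTop (𝓝 x) := by
    simpa only [add_zero] using
      (tendsto_one_div_add_atTop_nhds_zero_nat (𝕜 := ℝ)).const_add x
  exact tendsto_nhdsWithin_iff.2
    ⟨tendsto_of_tendsto_of_tendsto_of_le_of_le tendsto_const_nhds hlim hge hle,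
      Eventually.of_forall hge⟩

variable [TopologicalSpace.PseudoMetrizableSpace β] [MeasurableSpace β] [BorelSpace β]

/-- A right-continuous function is the pointwise limit of the step functions
`x ↦ f (⌈(n + 1) x⌉ / (n + 1))`. -/
theorem measurable_of_continuousWithinAt_Ici {f : ℝ → β}
    (hf : ∀ x, ContinuousWithinAt f (Ici x) x) : Measurable f := by
  refine measurable_of_tendsto_metrizable
    (f := fun n x => f ((⌈(n + 1 : ℝ) * x⌉ : ℝ) / (n + 1))) (fun n => ?_)
    (tendsto_pi_nhds.2 fun x => (hf x).tendsto.comp (tendsto_ceil_mul_div_nhdsWithin_Ici x))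
  exact (measurable_of_countable fun k : ℤ => f (k / (n + 1))).comp
    (measurable_const.mul measurable_id).ceil

lemma measurableSet_preimage_inter_Ici {f : ℝ → β} {a : ℝ}
    (hf : ∀ x, a ≤ x → ContinuousWithinAt f (Ici x) x) {t : Set β} (ht : MeasurableSet t) :
    MeasurableSet (f ⁻¹' t ∩ Ici a) := by
  have hmax : MeasurableSet ((fun y => f (max y a)) ⁻¹' t ∩ Ici a) :=
    (measurable_of_continuousWithinAt_Ici (continuousWithinAt_Ici_comp_max hf) ht).inter
      measurableSet_Ici
  convert hmax using 1
  ext y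
  simp +contextual

end RightContinuous

section Compensator

variable {S : Set ℝ} {a : ℝ}

lemma integrableOn_Icc_indicator_one (hS : MeasurableSet (S ∩ Ici a)) (b : ℝ) :
    IntegrableOn (S.indicator fun _ => (1 : ℝ)) (Icc a b) := by
  refine ((integrableOn_const (C := (1 : ℝ)) measure_Icc_lt_top.ne).indicator hS).congr_fun
    (fun x hx => ?_) measurableSet_Icc
  by_cases hxS : x ∈ S <;> simp [hxS, hx.1]

lemma setIntegral_Icc_indicator_one_mono (hS : MeasurableSet (S ∩ Ici a)) {b c : ℝ}
    (hbc : b ≤ c) :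
    ∫ s in Icc a b, S.indicator (fun _ => (1 : ℝ)) s ≤
      ∫ s in Icc a c, S.indicator (fun _ => (1 : ℝ)) s :=
  setIntegral_mono_set (integrableOn_Icc_indicator_one hS c)
    (Eventually.of_forall (indicator_nonneg fun _ _ => zero_le_one))
    (Icc_subset_Icc_right hbc).eventuallyLE

end Compensator

lemma sub_le_of_storage_eq {Y Z : ℝ → ℝ} {z : ℝ} (hZnn : ∀ t : ℝ, 0 ≤ t → 0 ≤ Z t)
    (hZeq : ∀ t : ℝ, 0 ≤ t →
      Z t = z + Y t +
        ∫ s in Icc (0 : ℝ) t, ({s : ℝ | Z s = 0}).indicator (fun _ => (1 : ℝ)) s)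
    (hmeas : MeasurableSet ({s : ℝ | Z s = 0} ∩ Ici 0)) {τ t : ℝ} (hτ : 0 ≤ τ) (hτt : τ ≤ t) :
    Y t - Y τ ≤ Z t := by
  have hmono := setIntegral_Icc_indicator_one_mono hmeas hτt
  linarith [hZeq t (hτ.trans hτt), hZeq τ hτ, hZnn τ hτ]

theorem stmt_2_general
    (Y : ℝ → ℝ)
    (z : ℝ) (hz : 0 ≤ z)
    (Z : ℝ → ℝ)
    (hZrc : ∀ t : ℝ, 0 ≤ t → ContinuousWithinAt Z (Ici t) t)
    (hZnn : ∀ t : ℝ, 0 ≤ t → 0 ≤ Z t)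
    (hZeq : ∀ t : ℝ, 0 ≤ t →
      Z t = z + Y t +
        ∫ s in Icc (0 : ℝ) t, ({s : ℝ | Z s = 0}).indicator (fun _ => (1 : ℝ)) s) :
    ∀ t : ℝ, 0 ≤ t →
      ((∀ τ : ℝ, 0 < τ → τ ≤ t → ∀ L : ℝ,
          Tendsto Y (nhdsWithin τ (Iio τ)) (nhds L) → Y t - L ≤ Z t) ∧
        Y t ≤ Z t) := by
  have hmeas : MeasurableSet ({s : ℝ | Z s = 0} ∩ Ici 0) :=
    measurableSet_preimage_inter_Ici hZrc (measurableSet_singleton 0)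
  intro t ht
  refine ⟨fun τ hτ hτt L hL => ?_, ?_⟩
  · refine le_of_tendsto (tendsto_const_nhds.sub hL) ?_
    filter_upwards [Ioo_mem_nhdsLT hτ] with τ' hτ'
    exact sub_le_of_storage_eq hZnn hZeq hmeas hτ'.1.le (hτ'.2.le.trans hτt)
  · have hI : 0 ≤ ∫ s in Icc (0 : ℝ) t, ({s : ℝ | Z s = 0}).indicator (fun _ => (1 : ℝ)) s :=
      integral_nonneg (indicator_nonneg fun _ _ => zero_le_one)
    linarith [hZeq t ht]

/-- key inequality in the proof of Proposition 1.
If `Z` is a nonnegative right-continuous solution of the storage integral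
equation with `Y t = X t - t`, `X` nondecreasing right-continuous, `X 0 = 0`,
then for every `0 < τ ≤ t` and every left limit value `L` of `Y` at `τ` one has
`Z t ≥ Y t - L`; moreover `Z t ≥ Y t`. -/
theorem stmt_2 (X : ℝ → ℝ)
    (hmono : ∀ ⦃s t : ℝ⦄, 0 ≤ s → s ≤ t → X s ≤ X t)
    (hrc : ∀ t : ℝ, 0 ≤ t → ContinuousWithinAt X (Ici t) t)
    (hX0 : X 0 = 0)
    (Y : ℝ → ℝ) (hY : ∀ t, Y t = X t - t)
    (z : ℝ) (hz : 0 ≤ z)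
    (Z : ℝ → ℝ)
    (hZrc : ∀ t : ℝ, 0 ≤ t → ContinuousWithinAt Z (Ici t) t)
    (hZnn : ∀ t : ℝ, 0 ≤ t → 0 ≤ Z t)
    (hZeq : ∀ t : ℝ, 0 ≤ t →
      Z t = z + Y t +
        ∫ s in Icc (0 : ℝ) t, ({s : ℝ | Z s = 0}).indicator (fun _ => (1 : ℝ)) s) :
    ∀ t : ℝ, 0 ≤ t →
      ((∀ τ : ℝ, 0 < τ → τ ≤ t → ∀ L : ℝ,
          Tendsto Y (nhdsWithin τ (Iio τ)) (nhds L) → Y t - L ≤ Z t) ∧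
        Y t ≤ Z t) :=
  stmt_2_general Y z hz Z hZrc hZnn hZeq
end

section
/- Let X : [0,∞) → Ω → ℝ be a process on a probability space (Ω, 𝓕, P) with: X(0) = 0 a.s.; independent increments (for every 0 ≤ t₀ ≤ t₁ ≤ ⋯ ≤ tₙ the random variables X(t₁)−X(t₀), …, X(tₙ)−X(tₙ₋₁) are independent); stationary increments (for all 0 ≤ s ≤ t, X(t)−X(s) has the same law as X(t−s)); almost surely right-continuous sample paths; and almost surely nondecreasing sample paths. Let Y(t) = t − X(t) and Z(t) = Y(t) + max(0, −inf_{s∈[0,t]} Y(s)). Then for each fixed t > 0, the random variable Z(t) is identically distributed with sup_{s∈[0,t]} Y(s) = sup_{s∈[0,t]} (s − X(s)). -/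
/-!
Because `Y 0 = 0`, the reflected process is `Z t = Y t - inf_{[0,t]} Y = sup_{s ≤ t} (Y t - Y s)`.
On the grid `t m / N` this maximum is a fixed function of the increments of `X` read backwards in
time, while `sup_{s ≤ t} Y s` restricted to the grid is the same function of the increments read
forwards. The increments are i.i.d., so the two grid maxima have the same law. Right-continuity of
the paths makes both grid maxima converge almost surely as `N → ∞`, and almost sure limits of
identically distributed sequences are identically distributed.
-/

open Set MeasureTheory ProbabilityTheory
variable {Ω : Type*} [MeasurableSpace Ω]

/-- Independent increments: for every finite nondecreasing sequence of times in
`[0,∞)` the successive increments are independent. -/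
def HasIndepIncrements (X : ℝ → Ω → ℝ) (P : Measure Ω) : Prop :=
  ∀ n : ℕ, ∀ t : Fin (n + 1) → ℝ, Monotone t → 0 ≤ t 0 →
    iIndepFun (m := fun _ => Real.measurableSpace)
      (fun i : Fin n => fun ω => X (t i.succ) ω - X (t i.castSucc) ω) P

/-- Stationary increments: `X t - X s` has the same law as `X (t - s)`. -/
def HasStatIncrements (X : ℝ → Ω → ℝ) (P : Measure Ω) : Prop :=
  ∀ s t : ℝ, 0 ≤ s → s ≤ t →
    IdentDistrib (fun ω => X t ω - X s ω) (X (t - s)) P P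

/-- A.s. right-continuous sample paths on `[0,∞)`. -/
def HasRCPaths (X : ℝ → Ω → ℝ) (P : Measure Ω) : Prop :=
  ∀ᵐ ω ∂P, ∀ t : ℝ, 0 ≤ t → ContinuousWithinAt (fun s => X s ω) (Ici t) t

/-- Lévy process: `X 0 = 0` a.s., independent and stationary increments,
a.s. right-continuous sample paths. -/
def IsLevyProcess (X : ℝ → Ω → ℝ) (P : Measure Ω) : Prop :=
  (∀ᵐ ω ∂P, X 0 ω = 0) ∧ _root_.HasIndepIncrements X P ∧ HasStatIncrements X P ∧ HasRCPaths X P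

/-- Spectrally positive: a.s. all jumps are nonnegative, i.e. every left limit
of the path lies below the current value. -/
def IsSpectrallyPositive (X : ℝ → Ω → ℝ) (P : Measure Ω) : Prop :=
  ∀ᵐ ω ∂P, ∀ s : ℝ, 0 < s → ∀ L : ℝ,
    Filter.Tendsto (fun r => X r ω) (nhdsWithin s (Iio s)) (nhds L) → L ≤ X s ω

open Filter Topology

namespace Fin

theorem partialSum_succ_sub_castSucc {G : Type*} [AddCommGroup G] {n : ℕ}
    (a : Fin (n + 1) → G) (m : Fin (n + 1)) :
    partialSum (fun i => a i.succ - a i.castSucc) m = a m - a 0 := by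
  have := congr_fun (partialSum_left_neg a) m
  simp only [Pi.vadd_apply, vadd_eq_add, neg_add_eq_sub] at this
  rw [← this, add_sub_cancel_left]

theorem partialSum_rev_succ_sub_castSucc {G : Type*} [AddCommGroup G] {n : ℕ}
    (a : Fin (n + 1) → G) (m : Fin (n + 1)) :
    partialSum (fun i => a i.rev.succ - a i.rev.castSucc) m = a (last n) - a m.rev := by
  simpa only [rev_succ, rev_castSucc, rev_zero, neg_sub_neg] using
    partialSum_succ_sub_castSucc (fun k => -a k.rev) m

theorem measurable_partialSum {M : Type*} [AddMonoid M] [MeasurableSpace M] [MeasurableAdd₂ M]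
    {n : ℕ} (m : Fin (n + 1)) : Measurable fun w : Fin n → M => partialSum w m := by
  induction m using Fin.induction with
  | zero => simp only [partialSum_zero]; exact measurable_const
  | succ m ih => simp only [partialSum_succ]; exact ih.add (measurable_pi_apply m)

end Fin

namespace ProbabilityTheory.IdentDistrib

theorem of_ae_tendsto {Ω' E ι : Type*} [MeasurableSpace Ω'] {μ : Measure Ω}
    {ν : Measure Ω'} [IsProbabilityMeasure μ] [IsProbabilityMeasure ν] [TopologicalSpace E]
    [TopologicalSpace.PseudoMetrizableSpace E] [MeasurableSpace E] [BorelSpace E]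
    {l : Filter ι} [l.NeBot] [l.IsCountablyGenerated] {f : ι → Ω → E} {g : ι → Ω' → E}
    {F : Ω → E} {G : Ω' → E}
    (hfg : ∀ i, IdentDistrib (f i) (g i) μ ν)
    (hf : ∀ᵐ ω ∂μ, Tendsto (fun i => f i ω) l (𝓝 (F ω)))
    (hg : ∀ᵐ ω ∂ν, Tendsto (fun i => g i ω) l (𝓝 (G ω))) : IdentDistrib F G μ ν := by
  have hFm := aemeasurable_of_tendsto_metrizable_ae l (fun i => (hfg i).aemeasurable_fst) hf
  have hGm := aemeasurable_of_tendsto_metrizable_ae l (fun i => (hfg i).aemeasurable_snd) hg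
  have hF := tendstoInDistribution_of_ae_tendsto (fun i => (hfg i).aemeasurable_fst) hFm hf
  have hG := tendstoInDistribution_of_ae_tendsto (fun i => (hfg i).aemeasurable_snd) hGm hg
  exact ⟨hFm, hGm, congrArg Subtype.val <| tendsto_nhds_unique (X := ProbabilityMeasure E)
    hF.tendsto (hG.tendsto.congr fun i => Subtype.ext (hfg i).map_eq.symm)⟩

theorem pi_of_iIndepFun {ι : Type*} [Fintype ι] {β : ι → Type*}
    [∀ i, MeasurableSpace (β i)] {μ : Measure Ω} [IsProbabilityMeasure μ] {f g : ∀ i, Ω → β i}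
    (hf : iIndepFun f μ) (hg : iIndepFun g μ) (hfg : ∀ i, IdentDistrib (f i) (g i) μ μ) :
    IdentDistrib (fun ω i => f i ω) (fun ω i => g i ω) μ μ :=
  ⟨aemeasurable_pi_iff.2 fun i => (hfg i).aemeasurable_fst,
    aemeasurable_pi_iff.2 fun i => (hfg i).aemeasurable_snd, by
    rw [hf.map_fun_eq_pi_map fun i => (hfg i).aemeasurable_fst,
      hg.map_fun_eq_pi_map fun i => (hfg i).aemeasurable_snd]
    simp only [(hfg _).map_eq]⟩

end ProbabilityTheory.IdentDistrib

noncomputable def gridPt (t : ℝ) (N : ℕ) (m : Fin (N + 1)) : ℝ := t * m / N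

noncomputable def gridMax (φ : ℝ → ℝ) (t : ℝ) (N : ℕ) : ℝ := ⨆ m, φ (gridPt t N m)

section Grid

variable {t : ℝ} {N : ℕ}

theorem gridPt_mem_Icc (ht : 0 ≤ t) (m : Fin (N + 1)) : gridPt t N m ∈ Icc 0 t :=
  ⟨by unfold gridPt; positivity, div_le_of_le_mul₀ N.cast_nonneg ht
    (mul_le_mul_of_nonneg_left (by exact_mod_cast m.is_le) ht)⟩

theorem gridPt_monotone (ht : 0 ≤ t) : Monotone (gridPt t N) := fun i j hij => by
  unfold gridPt; gcongr; exact_mod_cast hij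

theorem gridPt_zero : gridPt t N 0 = 0 := by simp [gridPt]

theorem gridPt_last (hN : N ≠ 0) : gridPt t N (Fin.last N) = t := by
  simp [gridPt, hN]

theorem gridPt_rev (hN : N ≠ 0) (m : Fin (N + 1)) : gridPt t N m.rev = t - gridPt t N m := by
  simp only [gridPt, Fin.val_rev]
  rw [Nat.cast_sub (by omega)]
  field_simp
  push_cast
  ring

theorem gridPt_succ_sub_castSucc (i : Fin N) :
    gridPt t N i.succ - gridPt t N i.castSucc = t / N := by
  simp only [gridPt, Fin.val_succ, Fin.val_castSucc]; push_cast; ring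

theorem exists_gridPt_mem_Ico (ht : 0 < t) (hN : N ≠ 0) {s : ℝ} (hs : s ∈ Icc 0 t) :
    ∃ m : Fin (N + 1), gridPt t N m ∈ Ico s (s + t / N) := by
  have hN' : (0 : ℝ) < N := by positivity
  have hk : 0 ≤ s * N / t := by have := hs.1; positivity
  refine ⟨⟨⌈s * N / t⌉₊, Nat.lt_succ_of_le (Nat.ceil_le.2 ?_)⟩, ?_, ?_⟩
  · rw [div_le_iff₀ ht, mul_comm]; gcongr; exact hs.2
  · simp only [gridPt]
    rw [le_div_iff₀ hN']
    calc s * N = t * (s * N / t) := by field_simp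
      _ ≤ t * ⌈s * N / t⌉₊ := by gcongr; exact Nat.le_ceil _
  · simp only [gridPt]
    rw [div_lt_iff₀ hN']
    calc t * ⌈s * N / t⌉₊ < t * (s * N / t + 1) := by gcongr; exact Nat.ceil_lt_add_one hk
      _ = (s + t / N) * N := by field_simp

variable {φ : ℝ → ℝ}

theorem gridMax_le_sSup (ht : 0 ≤ t) (hφ : BddAbove (φ '' Icc 0 t)) :
    gridMax φ t N ≤ sSup (φ '' Icc 0 t) :=
  ciSup_le fun m => le_csSup hφ (mem_image_of_mem φ (gridPt_mem_Icc ht m))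

theorem tendsto_gridMax (ht : 0 < t) (hφ : BddAbove (φ '' Icc 0 t))
    (hrc : ∀ s ∈ Icc 0 t, ContinuousWithinAt φ (Ici s) s) :
    Tendsto (gridMax φ t) atTop (𝓝 (sSup (φ '' Icc 0 t))) := by
  refine tendsto_order.2 ⟨fun a ha => ?_, fun a ha =>
    .of_forall fun N => (gridMax_le_sSup ht.le hφ).trans_lt ha⟩
  obtain ⟨_, ⟨s, hs, rfl⟩, has⟩ := exists_lt_of_lt_csSup ((nonempty_Icc.2 ht.le).image φ) ha
  obtain ⟨u, hsu, hu⟩ :=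
    mem_nhdsGE_iff_exists_Ico_subset.1 ((hrc s hs).eventually (lt_mem_nhds has))
  filter_upwards [(tendsto_const_div_atTop_nhds_zero_nat t).eventually
    (gt_mem_nhds (sub_pos.2 hsu)), eventually_ne_atTop 0] with N hN hN0
  obtain ⟨m, hm⟩ := exists_gridPt_mem_Ico ht hN0 hs
  exact (hu ⟨hm.1, by linarith [hm.2]⟩ : a < φ _).trans_le (le_ciSup (Finite.bddAbove_range _) m)

end Grid

section Path

variable {x : ℝ → ℝ} {t : ℝ}

theorem bddBelow_image_sub_self (hx : MonotoneOn x (Icc 0 t)) :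
    BddBelow ((fun s => s - x s) '' Icc 0 t) :=
  ⟨-x t, by rintro _ ⟨s, hs, rfl⟩; linarith [hx hs ⟨hs.1.trans hs.2, le_rfl⟩ hs.2, hs.1]⟩

theorem bddAbove_image_sub_self (hx : MonotoneOn x (Icc 0 t)) :
    BddAbove ((fun s => s - x s) '' Icc 0 t) :=
  ⟨t - x 0, by rintro _ ⟨s, hs, rfl⟩; linarith [hx ⟨le_rfl, hs.1.trans hs.2⟩ hs hs.1, hs.2]⟩

theorem reflection_eq_sSup_image_sub (hx0 : x 0 = 0) (hx : MonotoneOn x (Icc 0 t))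
    (ht : 0 ≤ t) :
    (t - x t) + max 0 (-sInf ((fun s => s - x s) '' Icc 0 t)) =
      sSup ((fun s => (t - x t) - (s - x s)) '' Icc 0 t) := by
  have hinf : sInf ((fun s => s - x s) '' Icc 0 t) ≤ 0 :=
    csInf_le (bddBelow_image_sub_self hx) ⟨0, left_mem_Icc.2 ht, by simp [hx0]⟩
  rw [max_eq_right (by linarith), ← sub_eq_add_neg, ← image_image (fun y => (t - x t) - y),
    Antitone.map_csInf_of_continuousAt (continuous_sub_left _).continuousAt
      (fun _ _ h => sub_le_sub_left h _) ((nonempty_Icc.2 ht).image _)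
      (bddBelow_image_sub_self hx)]

theorem tendsto_gridMax_sub_self (hx : MonotoneOn x (Icc 0 t))
    (hrc : ∀ s ∈ Icc 0 t, ContinuousWithinAt x (Ici s) s) (ht : 0 < t) :
    Tendsto (gridMax (fun s => s - x s) t) atTop
      (𝓝 (sSup ((fun s => s - x s) '' Icc 0 t))) :=
  tendsto_gridMax ht (bddAbove_image_sub_self hx) fun s hs =>
    continuousWithinAt_id.sub (hrc s hs)

theorem tendsto_gridMax_reflection (hx0 : x 0 = 0) (hx : MonotoneOn x (Icc 0 t))
    (hrc : ∀ s ∈ Icc 0 t, ContinuousWithinAt x (Ici s) s) (ht : 0 < t) :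
    Tendsto (gridMax (fun s => (t - x t) - (s - x s)) t) atTop
      (𝓝 ((t - x t) + max 0 (-sInf ((fun s => s - x s) '' Icc 0 t)))) := by
  have hbdd : BddAbove ((fun s => (t - x t) - (s - x s)) '' Icc 0 t) := by
    rw [← image_image (fun y => (t - x t) - y)]
    exact Antitone.map_bddBelow (fun _ _ h => sub_le_sub_left h _) (bddBelow_image_sub_self hx)
  rw [reflection_eq_sSup_image_sub hx0 hx ht.le]
  exact tendsto_gridMax ht hbdd fun s hs =>
    continuousWithinAt_const.sub (continuousWithinAt_id.sub (hrc s hs))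

end Path

section Levy

variable {P : Measure Ω} {X : ℝ → Ω → ℝ} {t : ℝ} {N : ℕ}

theorem identDistrib_gridIncrement (hStat : HasStatIncrements X P) (ht : 0 ≤ t) (i : Fin N) :
    IdentDistrib (fun ω => X (gridPt t N i.succ) ω - X (gridPt t N i.castSucc) ω)
      (X (t / N)) P P := by
  rw [← gridPt_succ_sub_castSucc i]
  exact hStat _ _ (gridPt_mem_Icc ht _).1 (gridPt_monotone ht (Fin.castSucc_le_succ i))

theorem identDistrib_gridIncrements_rev [IsProbabilityMeasure P]
    (hInd : _root_.HasIndepIncrements X P) (hStat : HasStatIncrements X P) (ht : 0 ≤ t) :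
    IdentDistrib
      (fun ω (i : Fin N) => X (gridPt t N i.rev.succ) ω - X (gridPt t N i.rev.castSucc) ω)
      (fun ω i => X (gridPt t N i.succ) ω - X (gridPt t N i.castSucc) ω) P P := by
  have hW := hInd N (gridPt t N) (gridPt_monotone ht) (gridPt_mem_Icc ht 0).1
  refine .pi_of_iIndepFun (hW.precomp Fin.rev_injective) hW fun i => ?_
  exact (identDistrib_gridIncrement hStat ht i.rev).trans
    (identDistrib_gridIncrement hStat ht i).symm

theorem identDistrib_gridMax [IsProbabilityMeasure P] (h0 : ∀ᵐ ω ∂P, X 0 ω = 0)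
    (hInd : _root_.HasIndepIncrements X P) (hStat : HasStatIncrements X P) (ht : 0 ≤ t)
    (hN : N ≠ 0) :
    IdentDistrib (fun ω => gridMax (fun s => (t - X t ω) - (s - X s ω)) t N)
      (fun ω => gridMax (fun s => s - X s ω) t N) P P := by
  set Φ : (Fin N → ℝ) → ℝ := fun w => ⨆ m, (gridPt t N m - Fin.partialSum w m)
  have hΦ : Measurable Φ :=
    Measurable.iSup fun m => measurable_const.sub (Fin.measurable_partialSum m)
  have h := (identDistrib_gridIncrements_rev hInd hStat ht).comp hΦ
  refine (IdentDistrib.of_ae_eq h.aemeasurable_fst (.of_forall fun ω => ?_)).symm.trans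
    (h.trans (IdentDistrib.of_ae_eq h.aemeasurable_snd ?_))
  · simp only [Function.comp_apply, Φ, gridMax,
      Fin.partialSum_rev_succ_sub_castSucc (fun m => X (gridPt t N m) ω)]
    rw [← Fin.revPerm.iSup_comp]
    simp only [Fin.revPerm_apply, Fin.rev_rev, gridPt_rev hN, gridPt_last hN]
    congr 1; funext m; ring
  · filter_upwards [h0] with ω h0ω
    simp only [Function.comp_apply, Φ, gridMax,
      Fin.partialSum_succ_sub_castSucc (fun m => X (gridPt t N m) ω), gridPt_zero, h0ω, sub_zero]

end Levy

/-- distributional identity (8) of Proposition 2.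
For a Lévy process `X` with a.s. nondecreasing sample paths, net supply
`Y t = t - X t`, the inventory level started from `0`,
`Z t = Y t + max 0 (-(inf_{s ∈ [0,t]} Y s))`, has for each fixed `t > 0` the
same distribution as `sup_{s ∈ [0,t]} (s - X s)`. -/
theorem stmt_8 (P : Measure Ω) [IsProbabilityMeasure P]
    (X : ℝ → Ω → ℝ) (hLevy : IsLevyProcess X P)
    (hmono : ∀ᵐ ω ∂P, ∀ ⦃s t : ℝ⦄, 0 ≤ s → s ≤ t → X s ω ≤ X t ω)
    (Y : ℝ → Ω → ℝ) (hY : ∀ t ω, Y t ω = t - X t ω)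
    (Z : ℝ → Ω → ℝ)
    (hZ : ∀ t ω, Z t ω = Y t ω + max 0 (-(sInf ((fun s => Y s ω) '' Icc (0 : ℝ) t)))) :
    ∀ t : ℝ, 0 < t →
      IdentDistrib (Z t)
        (fun ω => sSup ((fun s => s - X s ω) '' Icc (0 : ℝ) t)) P P := by
  intro t ht
  obtain ⟨h0, hInd, hStat, hRC⟩ := hLevy
  have hpath : ∀ᵐ ω ∂P, X 0 ω = 0 ∧ MonotoneOn (X · ω) (Icc 0 t) ∧
      ∀ s ∈ Icc 0 t, ContinuousWithinAt (X · ω) (Ici s) s := by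
    filter_upwards [h0, hmono, hRC] with ω h0ω hmω hrcω
    exact ⟨h0ω, fun a ha _ _ hab => hmω ha.1 hab, fun s hs => hrcω s hs.1⟩
  refine IdentDistrib.of_ae_tendsto (l := atTop)
    (f := fun N ω => gridMax (fun s => (t - X t ω) - (s - X s ω)) t (N + 1))
    (g := fun N ω => gridMax (fun s => s - X s ω) t (N + 1))
    (fun N => identDistrib_gridMax h0 hInd hStat ht.le N.succ_ne_zero) ?_ ?_
  · filter_upwards [hpath] with ω ⟨h0ω, hmω, hrcω⟩
    simp only [hZ, hY]
    exact (tendsto_gridMax_reflection h0ω hmω hrcω ht).comp (tendsto_add_atTop_nat 1)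
  · filter_upwards [hpath] with ω ⟨_, hmω, hrcω⟩
    exact (tendsto_gridMax_sub_self hmω hrcω ht).comp (tendsto_add_atTop_nat 1)
end
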